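/- arXiv:2109.12015 — 3 statements merged into one kernel-verified Lean document; each statement's English description precedes it below -/
import Mathlib

section
/- Let $d\ge1$, $s_1,s_2\in\mathbb{R}$, $0<p_1<p_2<\infty$, $0<q_1\le q_2\le\infty$ with $q_1=\frac{p_1}{p_2}q_2$ (or more generally $q_1\le\frac{p_1}{p_2}q_2$), $\tau_1=1/p_1$, $\tau_2=1/p_2$, and $s_1=s_2$. Then for every sequence $t$ supported in a fixed dyadic cube $\tilde Q_0$, $\|t\mid\tilde b^{s_2,1/p_2}_{p_2,q_2}(\tilde Q_0)\|\le \|t\mid\tilde b^{s_1,1/p_1}_{p_1,q_1}(\tilde Q_0)\|$. -/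
open MeasureTheory ENNReal

noncomputable section

attribute [local instance] Classical.propDecidable

/-- The dyadic cube `Q_{j,k} = 2^{-j}([0,1)^d + k)` in `ℝ^d`. -/
def dyadicCube (d : ℕ) (j : ℤ) (k : Fin d → ℤ) : Set (Fin d → ℝ) :=
  {x | ∀ i, (2:ℝ) ^ (-j) * (k i) ≤ x i ∧ x i < (2:ℝ) ^ (-j) * (k i + 1)}

/-- The `ℓ_p`-sum `(∑_{m : Q_{j,m} ⊆ Q_{jP,k}} |u m|^p)^{1/p}` (sup for `p = ∞`). -/
def cubeLpNorm (d : ℕ) (p : ℝ≥0∞) (jP : ℤ) (k : Fin d → ℤ) (j : ℕ)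
    (u : (Fin d → ℤ) → ℂ) : ℝ≥0∞ :=
  if p = ∞ then
    ⨆ m ∈ {m : Fin d → ℤ | dyadicCube d (j : ℤ) m ⊆ dyadicCube d jP k}, (‖u m‖₊ : ℝ≥0∞)
  else
    (∑' m : Fin d → ℤ,
        if dyadicCube d (j : ℤ) m ⊆ dyadicCube d jP k then (‖u m‖₊ : ℝ≥0∞) ^ p.toReal
        else 0) ^ (1 / p.toReal)

/-- The sequence space quasi-norm `‖t ∣ b̃^{s,τ}_{p,q}(Q_{J0,K0})‖`:
`sup_{P ⊆ Q_{J0,K0}} |P|^{-τ} (∑_{j ≥ max{j_P,0}} 2^{j(s+d/2-d/p)q}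
   ∑_i [∑_{m : Q_{j,m} ⊆ P} |t_{i,j,m}|^p]^{q/p})^{1/q}`. -/
def seqNorm (d : ℕ) (s τ : ℝ) (p q : ℝ≥0∞) (J0 : ℤ) (K0 : Fin d → ℤ)
    (t : Fin (2 ^ d - 1) → ℕ → (Fin d → ℤ) → ℂ) : ℝ≥0∞ :=
  ⨆ (jP : ℤ) (k : Fin d → ℤ) (_ : dyadicCube d jP k ⊆ dyadicCube d J0 K0),
    (2 : ℝ≥0∞) ^ ((jP : ℝ) * d * τ) *
      (if q = ∞ then
        ⨆ (j : ℕ) (_ : jP ≤ (j : ℤ)) (i : Fin (2 ^ d - 1)),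
          (2 : ℝ≥0∞) ^ ((j : ℝ) * (s + d / 2 - d / p.toReal)) * cubeLpNorm d p jP k j (t i j)
      else
        (∑' j : ℕ,
            if jP ≤ (j : ℤ) then
              ∑ i : Fin (2 ^ d - 1),
                ((2 : ℝ≥0∞) ^ ((j : ℝ) * (s + d / 2 - d / p.toReal)) *
                    cubeLpNorm d p jP k j (t i j)) ^ q.toReal
            else 0) ^ (1 / q.toReal))

/-- `t` is supported in cubes contained in `Q_{J0,K0}`. -/
def SupportedIn (d : ℕ) (J0 : ℤ) (K0 : Fin d → ℤ)
    (t : Fin (2 ^ d - 1) → ℕ → (Fin d → ℤ) → ℂ) : Prop :=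
  ∀ i (j : ℕ) m, ¬ dyadicCube d (j : ℤ) m ⊆ dyadicCube d J0 K0 → t i j m = 0

/-!
Normalise so that the `b̃^{s,1/p₁}_{p₁,q₁}` norm is at most `1` (divide by `N + ε`). Taking
`P = Q_{j,m}` shows that every normalised coefficient `2^{j(s+d/2)} |t_{i,j,m}|` is at most `1`,
so its `p₂`-th power is at most its `p₁`-th power. Because `τ = 1/p`, the `p`-th power of the
level-`j` term at a cube `P` is a sum of these `p`-th powers with weights independent of `p`;
hence the `p₂`-term is at most the `p₁`-term to the power `p₁/p₂`. The `p₁`-terms are at most `1`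
and `q₁ ≤ (p₁/p₂) q₂`, so the `q₂`-th powers of the `p₂`-terms are bounded by the `q₁`-th powers
of the `p₁`-terms, and summing over the levels gives the claim.
-/

def levelNorm {ι : Type*} [Fintype ι] (q : ℝ≥0∞) (jP : ℤ) (g : ℕ → ι → ℝ≥0∞) : ℝ≥0∞ :=
  if q = ∞ then ⨆ (j : ℕ) (_ : jP ≤ (j : ℤ)) (i : ι), g j i
  else (∑' j : ℕ, if jP ≤ (j : ℤ) then ∑ i, g j i ^ q.toReal else 0) ^ (1 / q.toReal)

section LevelNorm

variable {ι : Type*} [Fintype ι] {q : ℝ≥0∞} {jP : ℤ}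

lemma mul_levelNorm (hq : q ≠ 0) (C : ℝ≥0∞) (g : ℕ → ι → ℝ≥0∞) :
    C * levelNorm q jP g = levelNorm q jP (fun j i => C * g j i) := by
  unfold levelNorm
  split_ifs with hq_top
  · simp only [ENNReal.mul_iSup]
  · have hr : 0 < q.toReal := ENNReal.toReal_pos hq hq_top
    have hC : C = (C ^ q.toReal) ^ (1 / q.toReal) := by
      rw [← ENNReal.rpow_mul, mul_one_div_cancel hr.ne', ENNReal.rpow_one]
    rw [hC, ← ENNReal.mul_rpow_of_nonneg _ _ (one_div_pos.mpr hr).le, ← ENNReal.tsum_mul_left,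
      ← hC]
    congr 1
    refine tsum_congr fun j => ?_
    split_ifs
    · simp only [Finset.mul_sum, ENNReal.mul_rpow_of_nonneg _ _ hr.le]
    · exact mul_zero _

lemma le_levelNorm (hq : q ≠ 0) (g : ℕ → ι → ℝ≥0∞) {j : ℕ} (hj : jP ≤ j) (i : ι) :
    g j i ≤ levelNorm q jP g := by
  unfold levelNorm
  split_ifs with hq_top
  · exact le_iSup_of_le j (le_iSup_of_le hj (le_iSup_of_le i le_rfl))
  · have hr : 0 < q.toReal := ENNReal.toReal_pos hq hq_top
    rw [one_div, ENNReal.le_rpow_inv_iff hr]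
    refine le_trans ?_ (ENNReal.le_tsum j)
    rw [if_pos hj]
    exact Finset.single_le_sum (f := fun i => g j i ^ q.toReal) (fun _ _ => zero_le)
      (Finset.mem_univ i)

lemma levelNorm_le_one_of_le_rpow {q₁ q₂ θ : ℝ≥0∞} (hq₁ : q₁ ≠ 0) (hθ : θ ≠ ∞)
    (hq : q₁ ≤ θ * q₂) {f g : ℕ → ι → ℝ≥0∞} (hf : levelNorm q₁ jP f ≤ 1)
    (hg : ∀ j : ℕ, jP ≤ j → ∀ i, g j i ≤ f j i ^ θ.toReal) : levelNorm q₂ jP g ≤ 1 := by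
  have hf_le_one : ∀ j : ℕ, jP ≤ j → ∀ i, f j i ≤ 1 :=
    fun j hj i => (le_levelNorm hq₁ f hj i).trans hf
  unfold levelNorm
  split_ifs with hq₂
  · exact iSup_le fun j => iSup_le fun hj => iSup_le fun i =>
      (hg j hj i).trans (ENNReal.rpow_le_one (hf_le_one j hj i) ENNReal.toReal_nonneg)
  · have hθq₂ : θ * q₂ ≠ ∞ := ENNReal.mul_ne_top hθ hq₂
    have hq₁_top : q₁ ≠ ∞ := ne_top_of_le_ne_top hθq₂ hq
    have hr : q₁.toReal ≤ θ.toReal * q₂.toReal := by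
      rw [← ENNReal.toReal_mul]; exact ENNReal.toReal_mono hθq₂ hq
    have hsum : (∑' j : ℕ, if jP ≤ (j : ℤ) then ∑ i, f j i ^ q₁.toReal else 0) ≤ 1 := by
      unfold levelNorm at hf
      rwa [if_neg hq₁_top, one_div, ENNReal.rpow_inv_le_iff (ENNReal.toReal_pos hq₁ hq₁_top),
        ENNReal.one_rpow] at hf
    refine ENNReal.rpow_le_one (le_trans (ENNReal.tsum_le_tsum fun j => ?_) hsum)
      (one_div_nonneg.mpr ENNReal.toReal_nonneg)
    split_ifs with hj
    · refine Finset.sum_le_sum fun i _ => ?_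
      calc g j i ^ q₂.toReal ≤ (f j i ^ θ.toReal) ^ q₂.toReal :=
            ENNReal.rpow_le_rpow (hg j hj i) ENNReal.toReal_nonneg
        _ = f j i ^ (θ.toReal * q₂.toReal) := (ENNReal.rpow_mul _ _ _).symm
        _ ≤ f j i ^ q₁.toReal := ENNReal.rpow_le_rpow_of_exponent_ge (hf_le_one j hj i) hr
    · exact le_rfl

end LevelNorm

/-- The contribution `|P|^{-1/p} 2^{j(s+d/2-d/p)} (∑_{Q_{j,m} ⊆ P} |u m|^p)^{1/p}` of level `j`
to the norm of `b̃^{s,1/p}_{p,q}` at the cube `P = Q_{jP,k}`. -/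
def cubeTerm (d : ℕ) (s : ℝ) (p : ℝ≥0∞) (jP : ℤ) (k : Fin d → ℤ) (j : ℕ)
    (u : (Fin d → ℤ) → ℂ) : ℝ≥0∞ :=
  (2 : ℝ≥0∞) ^ ((jP : ℝ) * d * (p⁻¹).toReal) *
    ((2 : ℝ≥0∞) ^ ((j : ℝ) * (s + d / 2 - d / p.toReal)) * cubeLpNorm d p jP k j u)

lemma seqNorm_inv_eq_iSup_levelNorm {q : ℝ≥0∞} (hq : q ≠ 0) (d : ℕ) (s : ℝ) (p : ℝ≥0∞)
    (J0 : ℤ) (K0 : Fin d → ℤ) (t : Fin (2 ^ d - 1) → ℕ → (Fin d → ℤ) → ℂ) :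
    seqNorm d s (p⁻¹).toReal p q J0 K0 t =
      ⨆ (jP : ℤ) (k : Fin d → ℤ) (_ : dyadicCube d jP k ⊆ dyadicCube d J0 K0),
        levelNorm q jP (fun j i => cubeTerm d s p jP k j (t i j)) := by
  simp only [seqNorm, cubeTerm, ← mul_levelNorm hq]
  rfl

/-- For `τ = 1/p` the weight `2^{(jP-j)d} = |Q_{j,m}| / |P|` of a coefficient does not depend on
`p`; this is what makes the two norms comparable. -/
lemma rpow_mul_cubeTerm (C : ℝ≥0∞) {d : ℕ} (s : ℝ) {p : ℝ≥0∞} (hp₀ : p ≠ 0) (hp : p ≠ ∞)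
    (jP : ℤ) (k : Fin d → ℤ) (j : ℕ) (u : (Fin d → ℤ) → ℂ) :
    (C * cubeTerm d s p jP k j u) ^ p.toReal =
      ∑' m, if dyadicCube d j m ⊆ dyadicCube d jP k then
        (2 : ℝ≥0∞) ^ (((jP : ℝ) - j) * d) *
          (C * ((2 : ℝ≥0∞) ^ ((j : ℝ) * (s + d / 2)) * ‖u m‖₊)) ^ p.toReal
      else 0 := by
  have hr : 0 < p.toReal := ENNReal.toReal_pos hp₀ hp
  have h2 : (2 : ℝ≥0∞) ≠ 0 := two_ne_zero
  have h2t : (2 : ℝ≥0∞) ≠ ∞ := ENNReal.ofNat_ne_top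
  have hweight : C * (2 : ℝ≥0∞) ^ ((jP : ℝ) * d * (p.toReal)⁻¹) *
      (2 : ℝ≥0∞) ^ ((j : ℝ) * (s + d / 2 - d / p.toReal)) =
      (2 : ℝ≥0∞) ^ (((jP : ℝ) - j) * d / p.toReal) *
        (C * (2 : ℝ≥0∞) ^ ((j : ℝ) * (s + d / 2))) := by
    have hexp : (jP : ℝ) * d * (p.toReal)⁻¹ + j * (s + d / 2 - d / p.toReal) =
        ((jP : ℝ) - j) * d / p.toReal + j * (s + d / 2) := by
      field_simp
      ring
    rw [mul_assoc, ← ENNReal.rpow_add _ _ h2 h2t, hexp, ENNReal.rpow_add _ _ h2 h2t]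
    ring
  have hsum : ((∑' m, if dyadicCube d j m ⊆ dyadicCube d jP k then
      (‖u m‖₊ : ℝ≥0∞) ^ p.toReal else 0) ^ (1 / p.toReal)) ^ p.toReal =
      ∑' m, if dyadicCube d j m ⊆ dyadicCube d jP k then (‖u m‖₊ : ℝ≥0∞) ^ p.toReal else 0 := by
    rw [← ENNReal.rpow_mul, one_div_mul_cancel hr.ne', ENNReal.rpow_one]
  rw [cubeTerm, cubeLpNorm, if_neg hp, ENNReal.toReal_inv, ← mul_assoc, ← mul_assoc, hweight,
    ENNReal.mul_rpow_of_nonneg _ _ hr.le, hsum, ← ENNReal.tsum_mul_left]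
  refine tsum_congr fun m => ?_
  split_ifs
  · rw [ENNReal.mul_rpow_of_nonneg _ _ hr.le, ← ENNReal.rpow_mul, div_mul_cancel₀ _ hr.ne',
      ← mul_assoc C, ENNReal.mul_rpow_of_nonneg _ (‖u m‖₊ : ℝ≥0∞) hr.le]
    ring
  · exact mul_zero _

lemma rpow_mul_nnnorm_le_cubeTerm {d : ℕ} (s : ℝ) {p : ℝ≥0∞} (hp₀ : p ≠ 0) (hp : p ≠ ∞)
    (j : ℕ) (m : Fin d → ℤ) (u : (Fin d → ℤ) → ℂ) :
    (2 : ℝ≥0∞) ^ ((j : ℝ) * (s + d / 2)) * ‖u m‖₊ ≤ cubeTerm d s p j m j u := by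
  have hr : 0 < p.toReal := ENNReal.toReal_pos hp₀ hp
  rw [← ENNReal.rpow_le_rpow_iff hr, ← one_mul (cubeTerm d s p j m j u),
    rpow_mul_cubeTerm 1 s hp₀ hp]
  refine le_trans ?_ (ENNReal.le_tsum m)
  simp

lemma mul_cubeTerm_le_rpow {d : ℕ} (s : ℝ) {p₁ p₂ : ℝ≥0∞} (hp₁ : p₁ ≠ 0) (hp₁₂ : p₁ < p₂)
    (hp₂ : p₂ ≠ ∞) {C : ℝ≥0∞} {jP : ℤ} {k : Fin d → ℤ} {j : ℕ} {u : (Fin d → ℤ) → ℂ}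
    (hu : ∀ m, dyadicCube d j m ⊆ dyadicCube d jP k →
      C * ((2 : ℝ≥0∞) ^ ((j : ℝ) * (s + d / 2)) * ‖u m‖₊) ≤ 1) :
    C * cubeTerm d s p₂ jP k j u ≤ (C * cubeTerm d s p₁ jP k j u) ^ (p₁ / p₂).toReal := by
  have hp₁_top : p₁ ≠ ∞ := ne_top_of_lt hp₁₂
  have hr₁ : 0 < p₁.toReal := ENNReal.toReal_pos hp₁ hp₁_top
  have hr₂ : 0 < p₂.toReal := ENNReal.toReal_pos (pos_of_gt hp₁₂).ne' hp₂
  have hr₁₂ : p₁.toReal ≤ p₂.toReal := ENNReal.toReal_mono hp₂ hp₁₂.le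
  rw [← ENNReal.rpow_le_rpow_iff hr₂, ← ENNReal.rpow_mul, ENNReal.toReal_div,
    div_mul_cancel₀ _ hr₂.ne', rpow_mul_cubeTerm C s (pos_of_gt hp₁₂).ne' hp₂,
    rpow_mul_cubeTerm C s hp₁ hp₁_top]
  refine ENNReal.tsum_le_tsum fun m => ?_
  split_ifs with hm
  · exact mul_le_mul_right (ENNReal.rpow_le_rpow_of_exponent_ge (hu m hm) hr₁₂) _
  · exact le_rfl

theorem statement9_general (d : ℕ) (s : ℝ) (p1 p2 q1 q2 : ℝ≥0∞)
    (hp1 : 0 < p1) (hp12 : p1 < p2) (hp2 : p2 < ∞) (hq1 : 0 < q1)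
    (hq : q1 ≤ (p1 / p2) * q2) (J0 : ℤ) (K0 : Fin d → ℤ)
    (t : Fin (2 ^ d - 1) → ℕ → (Fin d → ℤ) → ℂ) :
    seqNorm d s (p2⁻¹).toReal p2 q2 J0 K0 t ≤ seqNorm d s (p1⁻¹).toReal p1 q1 J0 K0 t := by
  have hq2 : q2 ≠ 0 := by
    rintro rfl
    exact hq1.ne' (le_zero_iff.mp (mul_zero (p1 / p2) ▸ hq))
  set N := seqNorm d s (p1⁻¹).toReal p1 q1 J0 K0 t with hN_def
  have hlevel : ∀ jP k, dyadicCube d jP k ⊆ dyadicCube d J0 K0 →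
      levelNorm q1 jP (fun j i => cubeTerm d s p1 jP k j (t i j)) ≤ N := fun jP k hP => by
    rw [hN_def, seqNorm_inv_eq_iSup_levelNorm hq1.ne']
    exact le_iSup_of_le jP (le_iSup_of_le k (le_iSup_of_le hP le_rfl))
  refine ENNReal.le_of_forall_pos_le_add fun ε hε hN => ?_
  set M := N + ε
  have hM₀ : M ≠ 0 := by simp [M, hε.ne']
  have hM : M ≠ ∞ := ENNReal.add_ne_top.mpr ⟨hN.ne, ENNReal.coe_ne_top⟩
  have h_inv_mul_le_one : ∀ x, x ≤ N → M⁻¹ * x ≤ 1 := fun x hx => by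
    rw [ENNReal.inv_mul_le_iff hM₀ hM, mul_one]
    exact hx.trans le_self_add
  rw [seqNorm_inv_eq_iSup_levelNorm hq2]
  refine iSup_le fun jP => iSup_le fun k => iSup_le fun hP => ?_
  rw [← mul_one M, ← ENNReal.inv_mul_le_iff hM₀ hM, mul_levelNorm hq2]
  refine levelNorm_le_one_of_le_rpow hq1.ne' (ENNReal.div_ne_top (ne_top_of_lt hp12)
    (pos_of_gt hp12).ne') hq (f := fun j i => M⁻¹ * cubeTerm d s p1 jP k j (t i j))
    (by rw [← mul_levelNorm hq1.ne']; exact h_inv_mul_le_one _ (hlevel jP k hP)) fun j _ i => ?_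
  refine mul_cubeTerm_le_rpow s hp1.ne' hp12 hp2.ne fun m hm => h_inv_mul_le_one _ ?_
  exact (rpow_mul_nnnorm_le_cubeTerm s hp1.ne' (ne_top_of_lt (hp12.trans hp2)) j m _).trans
    (le_levelNorm hq1.ne' _ le_rfl i |>.trans (hlevel j m (hm.trans hP)))

/-- Substep 1.3 of the limiting embedding theorem: let `0 < p₁ < p₂ < ∞`,
`0 < q₁ ≤ q₂ ≤ ∞` with `q₁ ≤ (p₁/p₂) q₂`, `τ₁ = 1/p₁`, `τ₂ = 1/p₂` and `s₁ = s₂ = s`.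
Then for every sequence `t` supported in a fixed dyadic cube `Q̃₀`,
`‖t ∣ b̃^{s,1/p₂}_{p₂,q₂}(Q̃₀)‖ ≤ ‖t ∣ b̃^{s,1/p₁}_{p₁,q₁}(Q̃₀)‖`. -/
theorem statement9 (d : ℕ) (hd : 1 ≤ d) (s : ℝ) (p1 p2 q1 q2 : ℝ≥0∞)
    (hp1 : 0 < p1) (hp12 : p1 < p2) (hp2 : p2 < ∞) (hq1 : 0 < q1) (hq12 : q1 ≤ q2)
    (hq : q1 ≤ (p1 / p2) * q2) (J0 : ℤ) (K0 : Fin d → ℤ)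
    (t : Fin (2 ^ d - 1) → ℕ → (Fin d → ℤ) → ℂ) (ht : SupportedIn d J0 K0 t) :
    seqNorm d s (p2⁻¹).toReal p2 q2 J0 K0 t ≤ seqNorm d s (p1⁻¹).toReal p1 q1 J0 K0 t :=
  statement9_general d s p1 p2 q1 q2 hp1 hp12 hp2 hq1 hq J0 K0 t

end
end

section
/- Let $d\ge1$, $s_2\in\mathbb{R}$, $0<p_2<\infty$, $0<q_2<\infty$, $0\le\tau_2\le 1/p_2$. Define $\lambda_{i,j,m}=2^{-j(s_2+d/2)}$ if $i=1$ and $Q_{j,m}\subset Q_{0,0}=[0,1)^d$, and $0$ otherwise. Then for every dyadic cube $P\subset Q_{0,0}$ and every $j\ge j_P$ one has $2^{j(s_2+d/2-d/p_2)}(\sum_{m:Q_{j,m}\subset P}|\lambda_{1,j,m}|^{p_2})^{1/p_2}=2^{-j_P d/p_2}$, and consequently $\|\lambda\mid\tilde b^{s_2,\tau_2}_{p_2,q_2}\|=\infty$, while $\sup_{j}2^{j(s_2+d/2)}\sup_{i,m}|\lambda_{i,j,m}|=1$. -/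
open MeasureTheory ENNReal

noncomputable section

attribute [local instance] Classical.propDecidable

/-!
A dyadic cube `P` of side `2^{-j_P}` contains exactly `2^{(j-j_P)d}` subcubes of side `2^{-j}`,
so on level `j` the `ℓ_p`-sum of `λ` over `P` is `2^{(j-j_P)d/p} 2^{-j(s+d/2)}`, and the
normalizing factor `2^{j(s+d/2-d/p)}` turns this into `2^{-j_P d/p}`, independent of `j`.
For `P = Q_{0,0}` every level therefore contributes `1`, and the `ℓ_q`-sum over infinitely many
levels diverges, whereas `2^{j(s+d/2)}|λ_{i,j,m}|` only takes the values `0` and `1`.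
-/

lemma Ico_dyadic_subset_Ico_dyadic_iff (j : ℤ) (n : ℕ) (a b : ℤ) :
    Set.Ico ((2:ℝ) ^ (-(j + n)) * b) ((2:ℝ) ^ (-(j + n)) * (b + 1)) ⊆
        Set.Ico ((2:ℝ) ^ (-j) * a) ((2:ℝ) ^ (-j) * (a + 1)) ↔
      2 ^ n * a ≤ b ∧ b < 2 ^ n * (a + 1) := by
  set c : ℝ := (2:ℝ) ^ (-(j + n))
  have hc : 0 < c := zpow_pos two_pos _
  have hcoarse : (2:ℝ) ^ (-j) = c * 2 ^ n := by
    rw [← zpow_natCast, ← zpow_add₀ two_ne_zero]; ring_nf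
  rw [Set.Ico_subset_Ico_iff (by gcongr; linarith), hcoarse, mul_assoc, mul_assoc,
    mul_le_mul_iff_right₀ hc, mul_le_mul_iff_right₀ hc, Int.lt_iff_add_one_le]
  norm_cast

lemma dyadicCube_eq_pi (d : ℕ) (j : ℤ) (k : Fin d → ℤ) :
    dyadicCube d j k =
      Set.univ.pi fun i => Set.Ico ((2:ℝ) ^ (-j) * k i) ((2:ℝ) ^ (-j) * (k i + 1)) := by
  ext x
  simp [dyadicCube, Set.mem_pi]

lemma dyadicCube_nonempty (d : ℕ) (j : ℤ) (k : Fin d → ℤ) : (dyadicCube d j k).Nonempty :=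
  ⟨fun i => (2:ℝ) ^ (-j) * k i, fun _ =>
    ⟨le_rfl, mul_lt_mul_of_pos_left (lt_add_one _) (zpow_pos two_pos _)⟩⟩

def subcubeIndices {d : ℕ} (n : ℕ) (k : Fin d → ℤ) : Finset (Fin d → ℤ) :=
  Fintype.piFinset fun i => Finset.Ico (2 ^ n * k i) (2 ^ n * (k i + 1))

lemma dyadicCube_add_subset_iff (d : ℕ) (j : ℤ) (n : ℕ) (m k : Fin d → ℤ) :
    dyadicCube d (j + n) m ⊆ dyadicCube d j k ↔ m ∈ subcubeIndices n k := by
  have hne := dyadicCube_nonempty d (j + n) m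
  rw [dyadicCube_eq_pi] at hne ⊢
  rw [dyadicCube_eq_pi, Set.pi_subset_pi_iff, or_iff_left hne.ne_empty]
  simp only [Set.mem_univ, forall_const, Ico_dyadic_subset_Ico_dyadic_iff, subcubeIndices,
    Fintype.mem_piFinset, Finset.mem_Ico]

lemma card_subcubeIndices {d : ℕ} (n : ℕ) (k : Fin d → ℤ) :
    (subcubeIndices n k).card = 2 ^ (n * d) := by
  have hcard (a : ℤ) : (Finset.Ico (2 ^ n * a) (2 ^ n * (a + 1))).card = 2 ^ n := by
    rw [Int.card_Ico, mul_add, mul_one, add_sub_cancel_left]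
    exact_mod_cast Int.toNat_natCast (2 ^ n)
  simp [subcubeIndices, Fintype.card_piFinset, hcard, pow_mul]

lemma cubeLpNorm_of_nnnorm_eq {d : ℕ} {p : ℝ≥0∞} (hp0 : p ≠ 0) (hp : p ≠ ∞) {jP : ℤ} {j n : ℕ}
    (hj : (j : ℤ) = jP + n) (k : Fin d → ℤ) {u : (Fin d → ℤ) → ℂ} {c : ℝ≥0∞}
    (hu : ∀ m, dyadicCube d j m ⊆ dyadicCube d jP k → (‖u m‖₊ : ℝ≥0∞) = c) :
    cubeLpNorm d p jP k j u = 2 ^ ((n * d : ℝ) / p.toReal) * c := by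
  have hpr : p.toReal ≠ 0 := (ENNReal.toReal_pos hp0 hp).ne'
  simp_rw [hj, dyadicCube_add_subset_iff] at hu
  rw [cubeLpNorm, if_neg hp, hj]
  simp_rw [dyadicCube_add_subset_iff]
  rw [tsum_eq_sum (s := subcubeIndices n k) fun m hm => if_neg hm, Finset.sum_ite_mem,
    Finset.inter_self, Finset.sum_congr rfl fun m hm => by rw [hu m hm], Finset.sum_const,
    card_subcubeIndices, nsmul_eq_mul, ENNReal.mul_rpow_of_nonneg _ _ (by positivity),
    ← ENNReal.rpow_mul, mul_one_div_cancel hpr, ENNReal.rpow_one, Nat.cast_pow,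
    ← ENNReal.rpow_natCast, ← ENNReal.rpow_mul]
  push_cast
  ring_nf

lemma nnnorm_ofReal_two_rpow (x : ℝ) : (‖(((2:ℝ) ^ x : ℝ) : ℂ)‖₊ : ℝ≥0∞) = 2 ^ x := by
  rw [Complex.nnnorm_real, ← enorm_eq_nnnorm, Real.enorm_eq_ofReal (by positivity),
    ← ENNReal.ofReal_rpow_of_pos two_pos, ENNReal.ofReal_ofNat]

/-- The sequence `λ` of the theorem; the paper's index `i = 1` is `i.val = 0` here. -/
def unitCubeSeq (d : ℕ) (s : ℝ) : Fin (2 ^ d - 1) → ℕ → (Fin d → ℤ) → ℂ := fun i j m =>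
  if i.val = 0 ∧ dyadicCube d (j : ℤ) m ⊆ dyadicCube d 0 0 then
    (((2:ℝ) ^ (-(j : ℝ) * (s + d / 2)) : ℝ) : ℂ)
  else 0

lemma two_pow_sub_one_pos {d : ℕ} (hd : 0 < d) : 0 < 2 ^ d - 1 :=
  Nat.sub_pos_of_lt (Nat.one_lt_two_pow hd.ne')

section unitCubeSeq

variable {d : ℕ} {s : ℝ}

lemma nnnorm_unitCubeSeq (i : Fin (2 ^ d - 1)) (j : ℕ) (m : Fin d → ℤ) :
    (‖unitCubeSeq d s i j m‖₊ : ℝ≥0∞) =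
      if i.val = 0 ∧ dyadicCube d (j : ℤ) m ⊆ dyadicCube d 0 0 then
        2 ^ (-(j : ℝ) * (s + d / 2))
      else 0 := by
  unfold unitCubeSeq
  split_ifs
  · exact nnnorm_ofReal_two_rpow _
  · simp

lemma rpow_mul_nnnorm_unitCubeSeq (i : Fin (2 ^ d - 1)) (j : ℕ) (m : Fin d → ℤ) :
    2 ^ ((j : ℝ) * (s + d / 2)) * (‖unitCubeSeq d s i j m‖₊ : ℝ≥0∞) =
      if i.val = 0 ∧ dyadicCube d (j : ℤ) m ⊆ dyadicCube d 0 0 then 1 else 0 := by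
  rw [nnnorm_unitCubeSeq]
  split_ifs
  · rw [← ENNReal.rpow_add _ _ two_ne_zero ENNReal.ofNat_ne_top, ← add_mul, add_neg_cancel,
      zero_mul, ENNReal.rpow_zero]
  · rw [mul_zero]

lemma iSup_rpow_mul_nnnorm_unitCubeSeq (hd : 0 < d) :
    (⨆ (j : ℕ) (i : Fin (2 ^ d - 1)) (m : Fin d → ℤ),
        2 ^ ((j : ℝ) * (s + d / 2)) * (‖unitCubeSeq d s i j m‖₊ : ℝ≥0∞)) = 1 := by
  simp_rw [rpow_mul_nnnorm_unitCubeSeq]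
  refine le_antisymm (iSup_le fun _ => iSup_le fun _ => iSup_le fun _ => ?_) ?_
  · split_ifs <;> simp
  · exact le_iSup_of_le 0 (le_iSup_of_le ⟨0, two_pow_sub_one_pos hd⟩ (le_iSup_of_le 0 (by simp)))

lemma rpow_mul_cubeLpNorm_unitCubeSeq {p : ℝ≥0∞} (hp0 : p ≠ 0) (hp : p ≠ ∞) {jP : ℤ}
    {k : Fin d → ℤ} (hP : dyadicCube d jP k ⊆ dyadicCube d 0 0) {j : ℕ} (hj : jP ≤ j)
    {i : Fin (2 ^ d - 1)} (hi : i.val = 0) :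
    2 ^ ((j : ℝ) * (s + d / 2 - d / p.toReal)) * cubeLpNorm d p jP k j (unitCubeSeq d s i j) =
      2 ^ (-(jP : ℝ) * d / p.toReal) := by
  obtain ⟨n, hn⟩ := Int.le.dest hj
  have hjr : (j : ℝ) = jP + n := by exact_mod_cast hn.symm
  rw [cubeLpNorm_of_nnnorm_eq hp0 hp hn.symm k fun m hm => by
      rw [nnnorm_unitCubeSeq, if_pos ⟨hi, hm.trans hP⟩],
    ← mul_assoc, ← ENNReal.rpow_add _ _ two_ne_zero ENNReal.ofNat_ne_top,
    ← ENNReal.rpow_add _ _ two_ne_zero ENNReal.ofNat_ne_top, hjr]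
  ring_nf

end unitCubeSeq

lemma seqNorm_eq_top_of_one_le {d : ℕ} {s τ : ℝ} {p q : ℝ≥0∞} (hq0 : q ≠ 0) (hq : q ≠ ∞)
    {J0 : ℤ} {K0 : Fin d → ℤ} {t : Fin (2 ^ d - 1) → ℕ → (Fin d → ℤ) → ℂ}
    (ht : ∀ j : ℕ, J0 ≤ j → ∃ i,
      1 ≤ 2 ^ ((j : ℝ) * (s + d / 2 - d / p.toReal)) * cubeLpNorm d p J0 K0 j (t i j)) :
    seqNorm d s τ p q J0 K0 t = ∞ := by
  set g : ℕ → ℝ≥0∞ := fun j =>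
    if J0 ≤ (j : ℤ) then
      ∑ i, (2 ^ ((j : ℝ) * (s + d / 2 - d / p.toReal)) * cubeLpNorm d p J0 K0 j (t i j)) ^ q.toReal
    else 0
  have hqr : 0 < q.toReal := ENNReal.toReal_pos hq0 hq
  have hg (j : ℕ) (hj : J0 ≤ j) : 1 ≤ g j := by
    obtain ⟨i, hi⟩ := ht j hj
    simp only [g, if_pos hj]
    refine (ENNReal.one_le_rpow hi hqr).trans ?_
    exact Finset.single_le_sum_of_canonicallyOrdered (M := ℝ≥0∞) (Finset.mem_univ i)
  have hsum : ∑' j, g j = ∞ := by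
    refine top_le_iff.mp (le_trans ?_
      (ENNReal.tsum_comp_le_tsum_of_injective (add_left_injective J0.toNat) g))
    refine (ENNReal.tsum_const_eq_top_of_ne_zero (α := ℕ) one_ne_zero).symm.le.trans ?_
    exact ENNReal.tsum_le_tsum fun j => hg _ (by omega)
  refine top_le_iff.mp (le_iSup₂_of_le J0 K0 (le_iSup_of_le subset_rfl ?_))
  rw [if_neg hq, hsum, ENNReal.top_rpow_of_pos (by positivity),
    ENNReal.mul_top (ENNReal.rpow_pos two_pos ENNReal.ofNat_ne_top).ne']

theorem statement13_general (d : ℕ) (hd : 1 ≤ d) (s2 : ℝ) (p2 q2 : ℝ≥0∞)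
    (hp2a : 0 < p2) (hp2b : p2 < ∞) (hq2a : 0 < q2) (hq2b : q2 < ∞)
    (τ2 : ℝ) :
    let lam : Fin (2 ^ d - 1) → ℕ → (Fin d → ℤ) → ℂ := fun i j m =>
      if i.val = 0 ∧ dyadicCube d (j : ℤ) m ⊆ dyadicCube d 0 0 then
        (((2:ℝ) ^ (-(j : ℝ) * (s2 + d / 2)) : ℝ) : ℂ)
      else 0
    (∀ (jP : ℤ) (k : Fin d → ℤ), dyadicCube d jP k ⊆ dyadicCube d 0 0 →
        ∀ j : ℕ, jP ≤ (j : ℤ) → ∀ i : Fin (2 ^ d - 1), i.val = 0 →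
          (2 : ℝ≥0∞) ^ ((j : ℝ) * (s2 + d / 2 - d / p2.toReal)) *
              cubeLpNorm d p2 jP k j (lam i j)
            = (2 : ℝ≥0∞) ^ (-(jP : ℝ) * d / p2.toReal)) ∧
      seqNorm d s2 τ2 p2 q2 0 0 lam = ∞ ∧
      (⨆ (j : ℕ) (i : Fin (2 ^ d - 1)) (m : Fin d → ℤ),
          (2 : ℝ≥0∞) ^ ((j : ℝ) * (s2 + d / 2)) * (‖lam i j m‖₊ : ℝ≥0∞)) = 1 := by
  intro lam
  have hi0 : 0 < 2 ^ d - 1 := two_pow_sub_one_pos hd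
  refine ⟨fun _ _ hP _ hj _ hi => rpow_mul_cubeLpNorm_unitCubeSeq hp2a.ne' hp2b.ne hP hj hi,
    seqNorm_eq_top_of_one_le hq2a.ne' hq2b.ne fun j hj => ⟨⟨0, hi0⟩, ?_⟩,
    iSup_rpow_mul_nnnorm_unitCubeSeq hd⟩
  have hunit := rpow_mul_cubeLpNorm_unitCubeSeq (s := s2) (i := ⟨0, hi0⟩) hp2a.ne' hp2b.ne
    subset_rfl hj rfl
  rw [Int.cast_zero, neg_zero, zero_mul, zero_div, ENNReal.rpow_zero] at hunit
  exact hunit.ge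

/-- The counterexample in the necessity part of Proposition 4.4: the sequence
`λ_{i,j,m} = 2^{-j(s₂+d/2)}` for `i = 1`, `Q_{j,m} ⊆ Q_{0,0} = [0,1)^d` (and `0`
otherwise) satisfies `2^{j(s₂+d/2-d/p₂)} (∑_{m : Q_{j,m} ⊆ P} |λ_{1,j,m}|^{p₂})^{1/p₂}
= 2^{-j_P d/p₂}` for every dyadic `P ⊆ Q_{0,0}` and `j ≥ j_P`; consequently
`‖λ ∣ b̃^{s₂,τ₂}_{p₂,q₂}‖ = ∞` (for `q₂ < ∞`), while
`sup_j 2^{j(s₂+d/2)} sup_{i,m} |λ_{i,j,m}| = 1`. -/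
theorem statement13 (d : ℕ) (hd : 1 ≤ d) (s2 : ℝ) (p2 q2 : ℝ≥0∞)
    (hp2a : 0 < p2) (hp2b : p2 < ∞) (hq2a : 0 < q2) (hq2b : q2 < ∞)
    (τ2 : ℝ) (hτ2a : 0 ≤ τ2) (hτ2b : τ2 ≤ (p2⁻¹).toReal) :
    let lam : Fin (2 ^ d - 1) → ℕ → (Fin d → ℤ) → ℂ := fun i j m =>
      if i.val = 0 ∧ dyadicCube d (j : ℤ) m ⊆ dyadicCube d 0 0 then
        (((2:ℝ) ^ (-(j : ℝ) * (s2 + d / 2)) : ℝ) : ℂ)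
      else 0
    (∀ (jP : ℤ) (k : Fin d → ℤ), dyadicCube d jP k ⊆ dyadicCube d 0 0 →
        ∀ j : ℕ, jP ≤ (j : ℤ) → ∀ i : Fin (2 ^ d - 1), i.val = 0 →
          (2 : ℝ≥0∞) ^ ((j : ℝ) * (s2 + d / 2 - d / p2.toReal)) *
              cubeLpNorm d p2 jP k j (lam i j)
            = (2 : ℝ≥0∞) ^ (-(jP : ℝ) * d / p2.toReal)) ∧
      seqNorm d s2 τ2 p2 q2 0 0 lam = ∞ ∧
      (⨆ (j : ℕ) (i : Fin (2 ^ d - 1)) (m : Fin d → ℤ),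
          (2 : ℝ≥0∞) ^ ((j : ℝ) * (s2 + d / 2)) * (‖lam i j m‖₊ : ℝ≥0∞)) = 1 :=
  statement13_general d hd s2 p2 q2 hp2a hp2b hq2a hq2b τ2

end
end

section
/- Let $0<p_1<p_2\le\infty$, $0<\tau_1<1/p_1$, and set $\tau_0=(p_1/p_2)\tau_1$. Then $\tau_0<\tau_1$, $\tau_0\le 1/p_2$, and for any $\tau_2<\tau_0$ the chain $\tilde b^{s_1,\tau_1}_{p_1,q_1}\hookrightarrow\tilde b^{s_2,\tau_0}_{p_2,q_2}\hookrightarrow\tilde b^{s_2,\tau_2}_{p_2,q_2}$ holds on sequences supported in a fixed dyadic cube $\tilde Q_0$, provided $q_1\le(p_1/p_2)q_2$ and $\frac{s_1-s_2}{d}=\frac{1}{p_1}-\tau_1-\frac{1}{p_2}+\frac{p_1}{p_2}\tau_1$. -/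
/-!
Testing the `b̃^{s₁,τ₁}_{p₁,q₁}` norm `N` on the cube `Q_{j,m}` itself bounds every coefficient:
`|t_{i,j,m}| ≤ 2^{-j(dτ₁ + s₁ + d/2 - d/p₁)} N`. On a cube `P`, the `ℓ^{p₂}` norm of a block is at
most its sup norm to the power `1 - θ` times its `ℓ^{p₁}` norm to the power `θ = p₁/p₂`; the
relation between `s₁` and `s₂` makes the powers of `2` cancel, and `q₁ ≤ θ q₂` bounds the resulting
`ℓ^{θ q₂}` norm in `(j, i)` by the `ℓ^{q₁}` norm. The weight `|P|^{-θτ₁}` then turns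
`N^{1-θ} (|P|^{τ₁} N)^θ` into `N`. The second embedding holds because every `P ⊆ Q̃₀` has
`|P| ≤ |Q̃₀|`.
-/

open MeasureTheory ENNReal

noncomputable section

attribute [local instance] Classical.propDecidable

lemma le_of_dyadicCube_subset {d : ℕ} (hd : 0 < d) {j₁ j₂ : ℤ} {k₁ k₂ : Fin d → ℤ}
    (h : dyadicCube d j₁ k₁ ⊆ dyadicCube d j₂ k₂) : j₂ ≤ j₁ := by
  have hne : ∀ (j : ℤ) (n : ℤ), (2:ℝ) ^ (-j) * n < (2:ℝ) ^ (-j) * (n + 1) := fun j n =>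
    mul_lt_mul_of_pos_left (lt_add_one _) (zpow_pos two_pos _)
  rw [dyadicCube_eq_pi, dyadicCube_eq_pi, Set.univ_pi_subset_univ_pi_iff] at h
  obtain h | ⟨i, hi⟩ := h
  · obtain ⟨hlo, hhi⟩ := (Set.Ico_subset_Ico_iff (hne _ _)).1 (h ⟨0, hd⟩)
    have hside : (2:ℝ) ^ (-j₁) ≤ (2:ℝ) ^ (-j₂) := by linarith
    simpa using (zpow_le_zpow_iff_right₀ (one_lt_two (α := ℝ))).1 hside
  · exact absurd hi (Set.nonempty_Ico.2 (hne _ _)).ne_empty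

lemma toReal_div_le_one {a b : ℝ≥0∞} (hab : a ≤ b) (hb : b ≠ ∞) : (a / b).toReal ≤ 1 := by
  rw [ENNReal.toReal_div]
  exact div_le_one_of_le₀ (ENNReal.toReal_mono hb hab) ENNReal.toReal_nonneg

def familyLpNorm {ι : Type*} (p : ℝ≥0∞) (a : ι → ℝ≥0∞) : ℝ≥0∞ :=
  if p = ∞ then ⨆ i, a i else (∑' i, a i ^ p.toReal) ^ (1 / p.toReal)

section familyLpNorm

variable {ι : Type*} {p r : ℝ≥0∞} {a b : ι → ℝ≥0∞}

lemma familyLpNorm_top (a : ι → ℝ≥0∞) : familyLpNorm ∞ a = ⨆ i, a i :=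
  if_pos rfl

lemma familyLpNorm_of_ne_top (hp : p ≠ ∞) (a : ι → ℝ≥0∞) :
    familyLpNorm p a = (∑' i, a i ^ p.toReal) ^ (1 / p.toReal) :=
  if_neg hp

lemma le_familyLpNorm (hp : 0 < p) (a : ι → ℝ≥0∞) (i : ι) : a i ≤ familyLpNorm p a := by
  rcases eq_or_ne p ∞ with rfl | hp'
  · exact (le_iSup a i).trans_eq (familyLpNorm_top a).symm
  have hP : 0 < p.toReal := ENNReal.toReal_pos hp.ne' hp'
  calc a i = (a i ^ p.toReal) ^ (1 / p.toReal) := by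
        rw [← ENNReal.rpow_mul, mul_one_div_cancel hP.ne', ENNReal.rpow_one]
    _ ≤ familyLpNorm p a := by
        rw [familyLpNorm_of_ne_top hp']
        gcongr
        exact ENNReal.le_tsum i

lemma familyLpNorm_mono (h : ∀ i, a i ≤ b i) : familyLpNorm p a ≤ familyLpNorm p b := by
  unfold familyLpNorm
  split_ifs
  · exact iSup_mono h
  · gcongr with i
    exact h i

lemma familyLpNorm_const_mul (hp : 0 < p) (c : ℝ≥0∞) (a : ι → ℝ≥0∞) :
    familyLpNorm p (fun i => c * a i) = c * familyLpNorm p a := by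
  rcases eq_or_ne p ∞ with rfl | hp'
  · simp only [familyLpNorm_top, ENNReal.mul_iSup]
  have hP : 0 < p.toReal := ENNReal.toReal_pos hp.ne' hp'
  simp only [familyLpNorm_of_ne_top hp', ENNReal.mul_rpow_of_nonneg _ _ hP.le,
    ENNReal.tsum_mul_left]
  rw [ENNReal.mul_rpow_of_nonneg _ _ (by positivity), ← ENNReal.rpow_mul,
    mul_one_div_cancel hP.ne', ENNReal.rpow_one]

lemma familyLpNorm_rpow (hp : 0 < p) {θ : ℝ≥0∞} (hθ : 0 < θ) (hθ' : θ ≠ ∞) (a : ι → ℝ≥0∞) :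
    familyLpNorm p (fun i => a i ^ θ.toReal) = familyLpNorm (θ * p) a ^ θ.toReal := by
  have hΘ : 0 < θ.toReal := ENNReal.toReal_pos hθ.ne' hθ'
  rcases eq_or_ne p ∞ with rfl | hp'
  · rw [ENNReal.mul_top hθ.ne']
    simp only [familyLpNorm_top]
    exact ((ENNReal.orderIsoRpow _ hΘ).map_iSup a).symm
  have hP : 0 < p.toReal := ENNReal.toReal_pos hp.ne' hp'
  rw [familyLpNorm_of_ne_top hp', familyLpNorm_of_ne_top (ENNReal.mul_ne_top hθ' hp'),
    ENNReal.toReal_mul]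
  simp only [← ENNReal.rpow_mul]
  congr 1
  field_simp

lemma familyLpNorm_le_of_le (hp : 0 < p) (hpr : p ≤ r) (hr : r ≠ ∞) {B : ℝ≥0∞}
    (hB : ∀ i, a i ≤ B) :
    familyLpNorm r a ≤ B ^ (1 - (p / r).toReal) * familyLpNorm p a ^ (p / r).toReal := by
  have hp' : p ≠ ∞ := ne_top_of_le_ne_top hr hpr
  have hP : 0 < p.toReal := ENNReal.toReal_pos hp.ne' hp'
  have hPR : p.toReal ≤ r.toReal := ENNReal.toReal_mono hr hpr
  have hR : 0 < r.toReal := hP.trans_le hPR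
  have hsum : ∑' i, a i ^ r.toReal ≤ B ^ (r.toReal - p.toReal) * ∑' i, a i ^ p.toReal := by
    rw [← ENNReal.tsum_mul_left]
    refine ENNReal.tsum_le_tsum fun i => ?_
    calc a i ^ r.toReal = a i ^ (r.toReal - p.toReal) * a i ^ p.toReal := by
          rw [← ENNReal.rpow_add_of_nonneg _ _ (by linarith) hP.le, sub_add_cancel]
      _ ≤ B ^ (r.toReal - p.toReal) * a i ^ p.toReal := by
          gcongr
          exact hB i
  rw [familyLpNorm_of_ne_top hr, familyLpNorm_of_ne_top hp', ENNReal.toReal_div]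
  calc (∑' i, a i ^ r.toReal) ^ (1 / r.toReal)
      ≤ (B ^ (r.toReal - p.toReal) * ∑' i, a i ^ p.toReal) ^ (1 / r.toReal) := by gcongr
    _ = _ := by
        rw [ENNReal.mul_rpow_of_nonneg _ _ (by positivity), ← ENNReal.rpow_mul,
          ← ENNReal.rpow_mul]
        congr 2 <;> field_simp

lemma familyLpNorm_antitone (hp : 0 < p) (hpr : p ≤ r) (a : ι → ℝ≥0∞) :
    familyLpNorm r a ≤ familyLpNorm p a := by
  rcases eq_or_ne r ∞ with rfl | hr
  · exact (familyLpNorm_top a).trans_le (iSup_le (le_familyLpNorm hp a))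
  have hθ := toReal_div_le_one hpr hr
  refine (familyLpNorm_le_of_le hp hpr hr (le_familyLpNorm hp a)).trans_eq ?_
  rw [← ENNReal.rpow_add_of_nonneg _ _ (by linarith) ENNReal.toReal_nonneg, sub_add_cancel,
    ENNReal.rpow_one]

end familyLpNorm

lemma cubeLpNorm_eq_familyLpNorm {d : ℕ} {p : ℝ≥0∞} (hp : 0 < p) (jP : ℤ) (k : Fin d → ℤ)
    (j : ℕ) (u : (Fin d → ℤ) → ℂ) :
    cubeLpNorm d p jP k j u = familyLpNorm p fun m =>
      if dyadicCube d j m ⊆ dyadicCube d jP k then (‖u m‖₊ : ℝ≥0∞) else 0 := by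
  unfold cubeLpNorm familyLpNorm
  split_ifs with hp'
  · exact iSup_congr fun m => by by_cases hm : dyadicCube d j m ⊆ dyadicCube d jP k <;> simp [hm]
  · have hP : 0 < p.toReal := ENNReal.toReal_pos hp.ne' hp'
    congr 1
    exact tsum_congr fun m => by
      by_cases hm : dyadicCube d j m ⊆ dyadicCube d jP k <;> simp [hm, hP]

def localBlockNorms (d : ℕ) (s : ℝ) (p : ℝ≥0∞) (jP : ℤ) (k : Fin d → ℤ)
    (t : Fin (2 ^ d - 1) → ℕ → (Fin d → ℤ) → ℂ) : ℕ × Fin (2 ^ d - 1) → ℝ≥0∞ :=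
  fun x => if jP ≤ (x.1 : ℤ) then
    (2 : ℝ≥0∞) ^ ((x.1 : ℝ) * (s + d / 2 - d / p.toReal)) * cubeLpNorm d p jP k x.1 (t x.2 x.1)
  else 0

lemma seqNorm_eq {d : ℕ} (s τ : ℝ) (p : ℝ≥0∞) {q : ℝ≥0∞} (hq : 0 < q) (J0 : ℤ)
    (K0 : Fin d → ℤ) (t : Fin (2 ^ d - 1) → ℕ → (Fin d → ℤ) → ℂ) :
    seqNorm d s τ p q J0 K0 t =
      ⨆ (jP : ℤ) (k : Fin d → ℤ) (_ : dyadicCube d jP k ⊆ dyadicCube d J0 K0),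
        (2 : ℝ≥0∞) ^ ((jP : ℝ) * d * τ) * familyLpNorm q (localBlockNorms d s p jP k t) := by
  unfold seqNorm
  refine iSup_congr fun jP => iSup_congr fun k => iSup_congr fun _ => ?_
  congr 1
  unfold familyLpNorm localBlockNorms
  split_ifs with hq'
  · rw [iSup_prod]
    refine iSup_congr fun j => ?_
    by_cases hj : jP ≤ (j : ℤ) <;> simp [hj]
  · have hQ : 0 < q.toReal := ENNReal.toReal_pos hq.ne' hq'
    rw [ENNReal.tsum_prod']
    congr 1
    refine tsum_congr fun j => ?_
    by_cases hj : jP ≤ (j : ℤ) <;> simp [hj, hQ]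

lemma le_seqNorm {d : ℕ} {s τ : ℝ} {p q : ℝ≥0∞} (hq : 0 < q) {J0 jP : ℤ} {K0 k : Fin d → ℤ}
    (t : Fin (2 ^ d - 1) → ℕ → (Fin d → ℤ) → ℂ) (hP : dyadicCube d jP k ⊆ dyadicCube d J0 K0) :
    (2 : ℝ≥0∞) ^ ((jP : ℝ) * d * τ) * familyLpNorm q (localBlockNorms d s p jP k t) ≤
      seqNorm d s τ p q J0 K0 t := by
  rw [seqNorm_eq s τ p hq]
  exact le_iSup₂_of_le jP k (le_iSup_of_le hP le_rfl)

lemma two_rpow_mul_coeff_le_seqNorm {d : ℕ} {s τ : ℝ} {p q : ℝ≥0∞} (hp : 0 < p) (hq : 0 < q)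
    {J0 : ℤ} {K0 : Fin d → ℤ} (t : Fin (2 ^ d - 1) → ℕ → (Fin d → ℤ) → ℂ) (i : Fin (2 ^ d - 1))
    {j : ℕ} {m : Fin d → ℤ} (hm : dyadicCube d j m ⊆ dyadicCube d J0 K0) :
    (2 : ℝ≥0∞) ^ ((j : ℝ) * d * τ + (j : ℝ) * (s + d / 2 - d / p.toReal)) * ‖t i j m‖₊ ≤
      seqNorm d s τ p q J0 K0 t := by
  have hcoeff : (‖t i j m‖₊ : ℝ≥0∞) ≤ cubeLpNorm d p j m j (t i j) := by
    rw [cubeLpNorm_eq_familyLpNorm hp]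
    refine le_of_eq_of_le ?_ (le_familyLpNorm hp _ m)
    simp
  have hblock : (2 : ℝ≥0∞) ^ ((j : ℝ) * (s + d / 2 - d / p.toReal)) * ‖t i j m‖₊ ≤
      familyLpNorm q (localBlockNorms d s p j m t) := by
    refine le_trans ?_ (le_familyLpNorm hq _ (j, i))
    simp only [localBlockNorms, le_refl, if_true]
    gcongr
  calc _ = (2 : ℝ≥0∞) ^ (((j : ℤ) : ℝ) * d * τ) *
        ((2 : ℝ≥0∞) ^ ((j : ℝ) * (s + d / 2 - d / p.toReal)) * ‖t i j m‖₊) := by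
        rw [ENNReal.rpow_add _ _ two_ne_zero ENNReal.ofNat_ne_top, mul_assoc, Int.cast_natCast]
    _ ≤ _ := (mul_le_mul_right hblock _).trans (le_seqNorm hq t hm)

lemma two_rpow_neg_mul_le {e : ℝ} {x y : ℝ≥0∞} (h : (2 : ℝ≥0∞) ^ e * x ≤ y) :
    x ≤ (2 : ℝ≥0∞) ^ (-e) * y := by
  calc x = (2 : ℝ≥0∞) ^ (-e) * ((2 : ℝ≥0∞) ^ e * x) := by
        rw [← mul_assoc, ← ENNReal.rpow_add _ _ two_ne_zero ENNReal.ofNat_ne_top, neg_add_cancel,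
          ENNReal.rpow_zero, one_mul]
    _ ≤ (2 : ℝ≥0∞) ^ (-e) * y := by gcongr

section limiting

variable {d : ℕ} {s1 s2 τ1 : ℝ} {p1 p2 q1 q2 : ℝ≥0∞} {J0 : ℤ} {K0 : Fin d → ℤ}

lemma localBlockNorms_le (hp1 : 0 < p1) (hp12 : p1 ≤ p2) (hp2 : p2 ≠ ∞) (hq1 : 0 < q1)
    (hs : s2 + d / 2 - d / p2.toReal =
      s1 + d / 2 - d / p1.toReal + d * τ1 * (1 - (p1 / p2).toReal))
    (t : Fin (2 ^ d - 1) → ℕ → (Fin d → ℤ) → ℂ) {jP : ℤ} {k : Fin d → ℤ}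
    (hP : dyadicCube d jP k ⊆ dyadicCube d J0 K0) (x : ℕ × Fin (2 ^ d - 1)) :
    localBlockNorms d s2 p2 jP k t x ≤ seqNorm d s1 τ1 p1 q1 J0 K0 t ^ (1 - (p1 / p2).toReal) *
      localBlockNorms d s1 p1 jP k t x ^ (p1 / p2).toReal := by
  obtain ⟨j, i⟩ := x
  have hθ1 := toReal_div_le_one hp12 hp2
  set θ := (p1 / p2).toReal
  set N1 := seqNorm d s1 τ1 p1 q1 J0 K0 t
  have hθ0 : 0 ≤ θ := ENNReal.toReal_nonneg
  simp only [localBlockNorms]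
  split_ifs with hj
  swap
  · exact zero_le
  set e := (j : ℝ) * d * τ1 + (j : ℝ) * (s1 + d / 2 - d / p1.toReal) with he
  have hB : ∀ m, (if dyadicCube d j m ⊆ dyadicCube d jP k then (‖t i j m‖₊ : ℝ≥0∞) else 0) ≤
      (2 : ℝ≥0∞) ^ (-e) * N1 := by
    intro m
    split_ifs with hm
    · exact two_rpow_neg_mul_le (two_rpow_mul_coeff_le_seqNorm hp1 hq1 t i (hm.trans hP))
    · exact zero_le
  have hinterp := familyLpNorm_le_of_le hp1 hp12 hp2 hB
  rw [← cubeLpNorm_eq_familyLpNorm (hp1.trans_le hp12),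
    ← cubeLpNorm_eq_familyLpNorm hp1] at hinterp
  have hexp : (j : ℝ) * (s2 + d / 2 - d / p2.toReal) + -e * (1 - θ) =
      (j : ℝ) * (s1 + d / 2 - d / p1.toReal) * θ := by
    rw [hs, he]; ring
  calc _ ≤ (2 : ℝ≥0∞) ^ ((j : ℝ) * (s2 + d / 2 - d / p2.toReal)) *
        (((2 : ℝ≥0∞) ^ (-e) * N1) ^ (1 - θ) * cubeLpNorm d p1 jP k j (t i j) ^ θ) := by
        gcongr
    _ = (2 : ℝ≥0∞) ^ ((j : ℝ) * (s2 + d / 2 - d / p2.toReal) + -e * (1 - θ)) * N1 ^ (1 - θ) *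
        cubeLpNorm d p1 jP k j (t i j) ^ θ := by
        rw [ENNReal.mul_rpow_of_nonneg _ _ (by linarith), ← ENNReal.rpow_mul,
          ENNReal.rpow_add _ _ two_ne_zero ENNReal.ofNat_ne_top]
        ring
    _ = _ := by
        rw [hexp, ENNReal.mul_rpow_of_nonneg _ _ hθ0, ← ENNReal.rpow_mul]
        ring

lemma seqNorm_le_seqNorm_of_limiting (hp1 : 0 < p1) (hp12 : p1 ≤ p2) (hp2 : p2 ≠ ∞)
    (hq1 : 0 < q1) (hq : q1 ≤ p1 / p2 * q2)
    (hs : s2 + d / 2 - d / p2.toReal =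
      s1 + d / 2 - d / p1.toReal + d * τ1 * (1 - (p1 / p2).toReal))
    (t : Fin (2 ^ d - 1) → ℕ → (Fin d → ℤ) → ℂ) :
    seqNorm d s2 ((p1 / p2).toReal * τ1) p2 q2 J0 K0 t ≤ seqNorm d s1 τ1 p1 q1 J0 K0 t := by
  have hθ0 : 0 < p1 / p2 := ENNReal.div_pos hp1.ne' hp2
  have hθtop : p1 / p2 ≠ ∞ :=
    ENNReal.div_ne_top (ne_top_of_le_ne_top hp2 hp12) (hp1.trans_le hp12).ne'
  have hθ1 := toReal_div_le_one hp12 hp2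
  set θ := (p1 / p2).toReal
  have hθ0' : 0 ≤ θ := ENNReal.toReal_nonneg
  set N1 := seqNorm d s1 τ1 p1 q1 J0 K0 t
  have hq2 : 0 < q2 := by
    refine pos_iff_ne_zero.2 fun h => hq1.ne' (le_antisymm ?_ zero_le)
    simpa [h] using hq
  rw [seqNorm_eq _ _ _ hq2]
  refine iSup₂_le fun jP k => iSup_le fun hP => ?_
  set a := localBlockNorms d s1 p1 jP k t
  have hlocal : (2 : ℝ≥0∞) ^ ((jP : ℝ) * d * τ1) * familyLpNorm q1 a ≤ N1 := le_seqNorm hq1 t hP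
  calc _ ≤ (2 : ℝ≥0∞) ^ ((jP : ℝ) * d * (θ * τ1)) *
        familyLpNorm q2 (fun x => N1 ^ (1 - θ) * a x ^ θ) := by
        gcongr
        exact familyLpNorm_mono (localBlockNorms_le hp1 hp12 hp2 hq1 hs t hP)
    _ = (2 : ℝ≥0∞) ^ ((jP : ℝ) * d * (θ * τ1)) *
        (N1 ^ (1 - θ) * familyLpNorm (p1 / p2 * q2) a ^ θ) := by
        rw [familyLpNorm_const_mul hq2, familyLpNorm_rpow hq2 hθ0 hθtop]
    _ ≤ (2 : ℝ≥0∞) ^ ((jP : ℝ) * d * (θ * τ1)) * (N1 ^ (1 - θ) * familyLpNorm q1 a ^ θ) := by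
        gcongr
        exact familyLpNorm_antitone hq1 hq a
    _ = N1 ^ (1 - θ) * ((2 : ℝ≥0∞) ^ ((jP : ℝ) * d * τ1) * familyLpNorm q1 a) ^ θ := by
        rw [ENNReal.mul_rpow_of_nonneg _ _ hθ0', ← ENNReal.rpow_mul]
        ring_nf
    _ ≤ N1 ^ (1 - θ) * N1 ^ θ := by gcongr
    _ = N1 := by
        rw [← ENNReal.rpow_add_of_nonneg _ _ (by linarith) hθ0', sub_add_cancel,
          ENNReal.rpow_one]

end limiting

lemma seqNorm_le_two_rpow_mul_seqNorm_of_le {d : ℕ} (hd : 0 < d) {s τ τ' : ℝ} {p q : ℝ≥0∞}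
    (hτ : τ ≤ τ') (J0 : ℤ) (K0 : Fin d → ℤ) (t : Fin (2 ^ d - 1) → ℕ → (Fin d → ℤ) → ℂ) :
    seqNorm d s τ p q J0 K0 t ≤
      (2 : ℝ≥0∞) ^ ((J0 : ℝ) * d * (τ - τ')) * seqNorm d s τ' p q J0 K0 t := by
  unfold seqNorm
  refine iSup₂_le fun jP k => iSup_le fun hP => ?_
  refine le_trans ?_ (mul_le_mul_right (le_iSup₂_of_le jP k (le_iSup_of_le hP le_rfl)) _)
  rw [← mul_assoc, ← ENNReal.rpow_add _ _ two_ne_zero ENNReal.ofNat_ne_top]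
  gcongr ?_ * _
  refine ENNReal.rpow_le_rpow_of_exponent_le one_le_two ?_
  have hJ : (J0 : ℝ) ≤ jP := by exact_mod_cast le_of_dyadicCube_subset hd hP
  have hd' : (0 : ℝ) ≤ d := d.cast_nonneg
  nlinarith [mul_nonneg (mul_nonneg (sub_nonneg.2 hJ) hd') (sub_nonneg.2 hτ)]

/-- Substep 1.4 of the limiting embedding theorem: for `0 < p₁ < p₂ ≤ ∞`,
`0 < τ₁ < 1/p₁` and `τ₀ = (p₁/p₂)τ₁`, one has `τ₀ < τ₁`, `τ₀ ≤ 1/p₂`, and for any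
`0 ≤ τ₂ < τ₀`, provided `q₁ ≤ (p₁/p₂)q₂` and
`(s₁-s₂)/d = 1/p₁ - τ₁ - 1/p₂ + (p₁/p₂)τ₁`, the chain
`b̃^{s₁,τ₁}_{p₁,q₁} ↪ b̃^{s₂,τ₀}_{p₂,q₂} ↪ b̃^{s₂,τ₂}_{p₂,q₂}` holds on sequences
supported in a fixed dyadic cube `Q̃₀`. -/
theorem statement19 (d : ℕ) (hd : 1 ≤ d) (p1 p2 : ℝ≥0∞) (hp1 : 0 < p1) (hp12 : p1 < p2)
    (τ1 : ℝ) (hτ1 : 0 < τ1) (hτ1' : τ1 < (p1⁻¹).toReal) (J0 : ℤ) (K0 : Fin d → ℤ) :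
    (p1 / p2).toReal * τ1 < τ1 ∧ (p1 / p2).toReal * τ1 ≤ (p2⁻¹).toReal ∧
    ∀ τ2 : ℝ, 0 ≤ τ2 → τ2 < (p1 / p2).toReal * τ1 →
      ∀ q1 q2 : ℝ≥0∞, 0 < q1 → q1 ≤ (p1 / p2) * q2 →
        ∀ s1 s2 : ℝ,
          (s1 - s2) / d = (p1⁻¹).toReal - τ1 - (p2⁻¹).toReal + (p1 / p2).toReal * τ1 →
          ∃ C1 C2 : ℝ≥0∞, 0 < C1 ∧ C1 < ∞ ∧ 0 < C2 ∧ C2 < ∞ ∧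
            ∀ t : Fin (2 ^ d - 1) → ℕ → (Fin d → ℤ) → ℂ, SupportedIn d J0 K0 t →
              seqNorm d s2 ((p1 / p2).toReal * τ1) p2 q2 J0 K0 t ≤
                  C1 * seqNorm d s1 τ1 p1 q1 J0 K0 t ∧
                seqNorm d s2 τ2 p2 q2 J0 K0 t ≤
                  C2 * seqNorm d s2 ((p1 / p2).toReal * τ1) p2 q2 J0 K0 t := by
  rcases eq_or_ne p2 ∞ with rfl | hp2
  -- here `τ₀ = 0`, so no `τ₂` is admissible
  · simp only [ENNReal.div_top, ENNReal.toReal_zero, zero_mul, ENNReal.inv_top, le_refl, true_and]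
    exact ⟨hτ1, fun τ2 hτ2 hτ2' => absurd hτ2' hτ2.not_gt⟩
  have hP1 : 0 < p1.toReal := ENNReal.toReal_pos hp1.ne' hp12.ne_top
  have hP12 : p1.toReal < p2.toReal := ENNReal.toReal_strict_mono hp2 hp12
  have hθ : (p1 / p2).toReal = p1.toReal / p2.toReal := ENNReal.toReal_div _ _
  refine ⟨?_, ?_, fun τ2 _ hτ2 q1 q2 hq1 hq s1 s2 hs => ?_⟩
  · rw [hθ]
    exact mul_lt_of_lt_one_left hτ1 ((div_lt_one (hP1.trans hP12)).2 hP12)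
  · rw [ENNReal.toReal_inv] at hτ1' ⊢
    calc (p1 / p2).toReal * τ1 ≤ p1.toReal / p2.toReal * p1.toReal⁻¹ := by rw [hθ]; gcongr
      _ = p2.toReal⁻¹ := by field_simp
  have hs' : s2 + d / 2 - d / p2.toReal =
      s1 + d / 2 - d / p1.toReal + d * τ1 * (1 - (p1 / p2).toReal) := by
    rw [ENNReal.toReal_inv, ENNReal.toReal_inv, div_eq_iff (by positivity)] at hs
    rw [hθ] at hs ⊢
    linear_combination -hs
  refine ⟨1, (2 : ℝ≥0∞) ^ ((J0 : ℝ) * d * (τ2 - (p1 / p2).toReal * τ1)), one_pos, one_lt_top,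
    ENNReal.rpow_pos two_pos ofNat_ne_top,
    (ENNReal.rpow_ne_top_of_ne_zero two_ne_zero ofNat_ne_top).lt_top,
    fun t _ => ⟨?_, seqNorm_le_two_rpow_mul_seqNorm_of_le hd hτ2.le J0 K0 t⟩⟩
  rw [one_mul]
  exact seqNorm_le_seqNorm_of_limiting hp1 hp12.le hp2 hq1 hq hs' t

end
end
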